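/- arXiv:math/0108052 — 2 statements merged into one kernel-verified Lean document; each statement's English description precedes it below -/
import Mathlib

section
/- Let E(z), P(z) be differentiable families of bounded operators on H × K with E(z)P(z) = Id, where P(z) = [[A(z), R₋(z)],[R₊(z), 0]] and E(z) = [[E(z), E₊(z)],[E₋(z), E₋₊(z)]]. If A(z) = A₀ - z·Id (so ∂_z A = -Id) then E₋(z)E₊(z) = ∂_z E₋₊(z) + E₋₊(z) ∂_z R₊(z) E₊(z) + E₋(z) ∂_z R₋(z) E₋₊(z). -/
/-!
Differentiate `E₋ A + E₋₊ R₊ = 0` (where `A' = -1`) and `E₋ R₋ = 1`, compose the first derivative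
on the right with `E₊`, and simplify with `A E₊ = -R₋ E₋₊` and `R₊ E₊ = 1`.
-/

open ContinuousLinearMap

theorem HasDerivAt.clm_comp_of_isScalarTower {𝕜 𝕜' : Type*} [NontriviallyNormedField 𝕜]
    [NontriviallyNormedField 𝕜'] [NormedAlgebra 𝕜 𝕜'] {F G H : Type*}
    [NormedAddCommGroup F] [NormedSpace 𝕜' F]
    [NormedAddCommGroup G] [NormedSpace 𝕜 G] [NormedSpace 𝕜' G] [IsScalarTower 𝕜 𝕜' G]
    [NormedAddCommGroup H] [NormedSpace 𝕜 H] [NormedSpace 𝕜' H] [IsScalarTower 𝕜 𝕜' H]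
    {c : 𝕜 → G →L[𝕜'] H} {c' : G →L[𝕜'] H} {d : 𝕜 → F →L[𝕜'] G} {d' : F →L[𝕜'] G} {x : 𝕜}
    (hc : HasDerivAt c c' x) (hd : HasDerivAt d d' x) :
    HasDerivAt (fun y => c y ∘L d y) (c' ∘L d x + c x ∘L d') x := by
  simpa [add_comm] using ((compL 𝕜' F G H).bilinearRestrictScalars 𝕜).hasDerivAt_of_bilinear
    (fun _ => hc) (fun _ => hd)

theorem HasDerivAt.eq_zero_of_forall_eq {𝕜 F : Type*} [NontriviallyNormedField 𝕜]
    [NormedAddCommGroup F] [NormedSpace 𝕜 F] {f : 𝕜 → F} {f' c : F} {x : 𝕜}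
    (hf : HasDerivAt f f' x) (h : ∀ y, f y = c) : f' = 0 :=
  hf.unique (funext h ▸ hasDerivAt_const x c)

theorem hasDerivAt_const_sub_smul {𝕜 E : Type*} [NontriviallyNormedField 𝕜]
    [NormedAddCommGroup E] [NormedSpace 𝕜 E] (a b : E) (x : 𝕜) :
    HasDerivAt (fun z : 𝕜 => a - z • b) (-b) x := by
  simpa using ((hasDerivAt_id x).smul_const b).const_sub a

theorem comp_eq_of_grushin_derivatives {𝕜 H K : Type*} [NontriviallyNormedField 𝕜]
    [NormedAddCommGroup H] [NormedSpace 𝕜 H] [NormedAddCommGroup K] [NormedSpace 𝕜 K]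
    {A : H →L[𝕜] H} {Rm Rm' : K →L[𝕜] H} {Rp Rp' : H →L[𝕜] K} {Ep : K →L[𝕜] H}
    {Em Em' : H →L[𝕜] K} {Emp Emp' : K →L[𝕜] K}
    (hAEp : A ∘L Ep + Rm ∘L Emp = 0) (hRpEp : Rp ∘L Ep = 1)
    (hdA : Em' ∘L A + Em ∘L (-1) + (Emp' ∘L Rp + Emp ∘L Rp') = 0)
    (hdRm : Em' ∘L Rm + Em ∘L Rm' = 0) :
    Em ∘L Ep = Emp' + Emp ∘L Rp' ∘L Ep + Em ∘L Rm' ∘L Emp := by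
  have hEm : Em = Em' ∘L A + Emp' ∘L Rp + Emp ∘L Rp' := by
    rw [comp_neg, one_def, comp_id] at hdA
    linear_combination (norm := abel) -hdA
  calc Em ∘L Ep = Em' ∘L (A ∘L Ep) + Emp' ∘L (Rp ∘L Ep) + Emp ∘L Rp' ∘L Ep := by
        rw [hEm]; simp only [add_comp, comp_assoc]
    _ = -((Em' ∘L Rm) ∘L Emp) + Emp' + Emp ∘L Rp' ∘L Ep := by
        rw [eq_neg_of_add_eq_zero_left hAEp, hRpEp, comp_neg, comp_assoc]; rfl
    _ = Emp' + Emp ∘L Rp' ∘L Ep + Em ∘L Rm' ∘L Emp := by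
        rw [eq_neg_of_add_eq_zero_left hdRm, neg_comp, neg_neg, comp_assoc]; abel

theorem stmt_5_general {H K : Type*}
    [NormedAddCommGroup H] [InnerProductSpace ℂ H]
    [NormedAddCommGroup K] [InnerProductSpace ℂ K]
    (A₀ : H →L[ℂ] H)
    (A : ℝ → H →L[ℂ] H) (Rm : ℝ → K →L[ℂ] H) (Rp : ℝ → H →L[ℂ] K)
    (Ep : ℝ → K →L[ℂ] H) (Em : ℝ → H →L[ℂ] K)
    (Emp : ℝ → K →L[ℂ] K)
    (hAform : ∀ z : ℝ, A z = A₀ - z • (1 : H →L[ℂ] H))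
    -- 𝓟(z) ∘ 𝓔(z) = Id for all z :
    (h2 : ∀ z, A z ∘L Ep z + Rm z ∘L Emp z = 0)
    (h4 : ∀ z, Rp z ∘L Ep z = 1)
    -- 𝓔(z) ∘ 𝓟(z) = Id for all z :
    (h7 : ∀ z, Em z ∘L A z + Emp z ∘L Rp z = 0) (h8 : ∀ z, Em z ∘L Rm z = 1)
    (z₀ : ℝ)
    (Rm' : K →L[ℂ] H) (Rp' : H →L[ℂ] K)
    (Em' : H →L[ℂ] K) (Emp' : K →L[ℂ] K)
    (hRm : HasDerivAt Rm Rm' z₀) (hRp : HasDerivAt Rp Rp' z₀)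
    (hEm : HasDerivAt Em Em' z₀) (hEmp : HasDerivAt Emp Emp' z₀) :
    Em z₀ ∘L Ep z₀ = Emp' + Emp z₀ ∘L Rp' ∘L Ep z₀
        + Em z₀ ∘L Rm' ∘L Emp z₀ := by
  have hA : HasDerivAt A (-1) z₀ := funext hAform ▸ hasDerivAt_const_sub_smul A₀ 1 z₀
  have hdA := ((hEm.clm_comp_of_isScalarTower hA).add
    (hEmp.clm_comp_of_isScalarTower hRp)).eq_zero_of_forall_eq h7
  have hdRm := (hEm.clm_comp_of_isScalarTower hRm).eq_zero_of_forall_eq h8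
  exact comp_eq_of_grushin_derivatives (h2 z₀) (h4 z₀) hdA hdRm

/-- If moreover `A(z) = A₀ - z·Id` (so `∂_z A = -Id`), then
`E₋ E₊ = ∂_z E₋₊ + E₋₊ ∂_z R₊ E₊ + E₋ ∂_z R₋ E₋₊`. -/
theorem stmt_5 {H K : Type*}
    [NormedAddCommGroup H] [InnerProductSpace ℂ H] [CompleteSpace H]
    [NormedAddCommGroup K] [InnerProductSpace ℂ K] [CompleteSpace K]
    (A₀ : H →L[ℂ] H)
    (A : ℝ → H →L[ℂ] H) (Rm : ℝ → K →L[ℂ] H) (Rp : ℝ → H →L[ℂ] K)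
    (E : ℝ → H →L[ℂ] H) (Ep : ℝ → K →L[ℂ] H) (Em : ℝ → H →L[ℂ] K)
    (Emp : ℝ → K →L[ℂ] K)
    (hAform : ∀ z : ℝ, A z = A₀ - z • (1 : H →L[ℂ] H))
    -- 𝓟(z) ∘ 𝓔(z) = Id for all z :
    (h1 : ∀ z, A z ∘L E z + Rm z ∘L Em z = 1)
    (h2 : ∀ z, A z ∘L Ep z + Rm z ∘L Emp z = 0)
    (h3 : ∀ z, Rp z ∘L E z = 0) (h4 : ∀ z, Rp z ∘L Ep z = 1)
    -- 𝓔(z) ∘ 𝓟(z) = Id for all z :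
    (h5 : ∀ z, E z ∘L A z + Ep z ∘L Rp z = 1) (h6 : ∀ z, E z ∘L Rm z = 0)
    (h7 : ∀ z, Em z ∘L A z + Emp z ∘L Rp z = 0) (h8 : ∀ z, Em z ∘L Rm z = 1)
    (z₀ : ℝ)
    (Rm' : K →L[ℂ] H) (Rp' : H →L[ℂ] K)
    (E' : H →L[ℂ] H) (Ep' : K →L[ℂ] H) (Em' : H →L[ℂ] K) (Emp' : K →L[ℂ] K)
    (hRm : HasDerivAt Rm Rm' z₀) (hRp : HasDerivAt Rp Rp' z₀)
    (hE : HasDerivAt E E' z₀) (hEp : HasDerivAt Ep Ep' z₀)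
    (hEm : HasDerivAt Em Em' z₀) (hEmp : HasDerivAt Emp Emp' z₀) :
    Em z₀ ∘L Ep z₀ = Emp' + Emp z₀ ∘L Rp' ∘L Ep z₀
        + Em z₀ ∘L Rm' ∘L Emp z₀ :=
  stmt_5_general A₀ A Rm Rp Ep Em Emp hAform h2 h4 h7 h8 z₀ Rm' Rp' Em' Emp' hRm hRp hEm hEmp
end

section
/- Let φ be a real symmetric 2n×2n matrix written in n×n blocks as φ'' = [[φ_xx, φ_xη],[φ_ηx, φ_ηη]] with φ_ηx = (φ_xη)ᵗ invertible. Define the linear map dκ : R^{2n} → R^{2n} by dκ = [[(φ_ηx)^{-1}, -(φ_ηx)^{-1} φ_ηη],[φ_xx (φ_ηx)^{-1}, φ_xη - φ_xx (φ_ηx)^{-1} φ_ηη]]. Then det(dκ - I) = (1/det φ_ηx) · det [[φ_xx, φ_xη - I],[φ_ηx - I, φ_ηη]]. -/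
open Matrix

lemma aux_det_K (n : ℕ) :
    (Matrix.fromBlocks (0 : Matrix (Fin n) (Fin n) ℝ) (1 : Matrix (Fin n) (Fin n) ℝ) (-1 : Matrix (Fin n) (Fin n) ℝ) (0 : Matrix (Fin n) (Fin n) ℝ)).det = 1 := by
  have hfac : Matrix.fromBlocks (0 : Matrix (Fin n) (Fin n) ℝ) (1 : Matrix (Fin n) (Fin n) ℝ) (-1 : Matrix (Fin n) (Fin n) ℝ) (0 : Matrix (Fin n) (Fin n) ℝ) =
      Matrix.fromBlocks 1 1 0 1 * Matrix.fromBlocks 1 0 (-1) 1 *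
        Matrix.fromBlocks 1 1 0 1 := by
    simp [Matrix.fromBlocks_multiply, Matrix.mul_one, Matrix.one_mul]
  rw [hfac, Matrix.det_mul, Matrix.det_mul, Matrix.det_fromBlocks_zero₂₁,
    Matrix.det_fromBlocks_zero₁₂, Matrix.det_one]
  simp

/-- Equation (eq:7): for a symmetric Hessian `φ'' = [[φxx, φxη],[φηx, φηη]]`
with `φηx = φxηᵀ` invertible, the differential of the associated canonical
transformation satisfies
`det(dκ - 1) = det(φηx)⁻¹ · det [[φxx, φxη - 1],[φηx - 1, φηη]]`. -/
theorem stmt_8 (n : ℕ) (φxx φxη φηx φηη : Matrix (Fin n) (Fin n) ℝ)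
    (hxx : φxxᵀ = φxx) (hηη : φηηᵀ = φηη) (hηx : φηx = φxηᵀ)
    (hinv : IsUnit φηx.det) :
    (Matrix.fromBlocks φηx⁻¹ (-(φηx⁻¹ * φηη)) (φxx * φηx⁻¹)
        (φxη - φxx * φηx⁻¹ * φηη) - 1).det =
      (φηx.det)⁻¹ *
        (Matrix.fromBlocks φxx (φxη - 1) (φηx - 1) φηη).det := by
  set B := φηx⁻¹ with hBdef
  have hB : B * φηx = 1 := Matrix.nonsing_inv_mul _ hinv
  set K : Matrix (Fin n ⊕ Fin n) (Fin n ⊕ Fin n) ℝ :=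
    Matrix.fromBlocks 0 1 (-1) 0 with hK
  set S : Matrix (Fin n ⊕ Fin n) (Fin n ⊕ Fin n) ℝ :=
    Matrix.fromBlocks (-1) (φxx * B) 0 (-B) with hS
  set M : Matrix (Fin n ⊕ Fin n) (Fin n ⊕ Fin n) ℝ :=
    Matrix.fromBlocks φxx (φxη - 1) (φηx - 1) φηη with hM
  have key : Matrix.fromBlocks B (-(B * φηη)) (φxx * B)
      (φxη - φxx * B * φηη) - 1 = K * (S * M) := by
    rw [hK, hS, hM, Matrix.fromBlocks_multiply, Matrix.fromBlocks_multiply,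
      ← Matrix.fromBlocks_one]
    have e11 : B - 1 = 0 * (-1 * φxx + φxx * B * (φηx - 1)) +
        1 * (0 * φxx + -B * (φηx - 1)) := by
      noncomm_ring [hB]
    have e12 : -(B * φηη) - 0 = 0 * (-1 * (φxη - 1) + φxx * B * φηη) +
        1 * (0 * (φxη - 1) + -B * φηη) := by
      noncomm_ring
    have e21 : φxx * B - 0 = -1 * (-1 * φxx + φxx * B * (φηx - 1)) +
        0 * (0 * φxx + -B * (φηx - 1)) := by
      noncomm_ring [hB]
    have e22 : φxη - φxx * B * φηη - 1 =
        -1 * (-1 * (φxη - 1) + φxx * B * φηη) +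
          0 * (0 * (φxη - 1) + -B * φηη) := by
      noncomm_ring
    have hsub : ∀ (a b c d a' b' c' d' : Matrix (Fin n) (Fin n) ℝ),
        Matrix.fromBlocks a b c d - Matrix.fromBlocks a' b' c' d' =
          Matrix.fromBlocks (a - a') (b - b') (c - c') (d - d') := by
      intro a b c d a' b' c' d'
      ext (i | i) (j | j) <;> simp [Matrix.fromBlocks, Matrix.sub_apply]
    rw [hsub, e11, e12, e21, e22]
  rw [key, Matrix.det_mul, Matrix.det_mul, aux_det_K, one_mul, hS,
    Matrix.det_fromBlocks_zero₂₁, Matrix.det_neg, Matrix.det_neg]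
  have hdetB : B.det = (φηx.det)⁻¹ := by
    rw [hBdef, Matrix.det_nonsing_inv, Ring.inverse_eq_inv']
  rw [hdetB]
  ring_nf
  rw [Matrix.det_one, one_mul, mul_comm (Fintype.card (Fin n)) 2, pow_mul]
  norm_num
end
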